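/- arXiv:2307.11919 — 2 statements merged into one kernel-verified Lean document; each statement's English description precedes it below -/
import Mathlib

section
/- Let Ũ : ℝ → ℝ be concave, nondecreasing, non-constant and continuously differentiable, let z ∈ ℝ, and define U : ℝ → ℝ by U(x) := Ũ(x − z). Then AE₋(U) = AE₋(Ũ); and if moreover lim_{x→+∞} Ũ(x) > 0 (equivalently Ũ(x₀) > 0 for some x₀), then AE₊(U) = AE₊(Ũ). -/
/-!
The elasticity `x U'(x) / U(x)` of `U = Ũ(· - z)` at `x` is the elasticity of `Ũ` at
`x - z` times `x / (x - z)`. This factor tends to `1` as `|x| → ∞`, and multiplying by a factor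
that tends to `1` changes neither the `limsup` nor the `liminf` in `EReal`; finally both are
invariant under the translation `x ↦ x - z`.
-/

open Filter Set

/-- Asymptotic elasticity at `+∞`: `limsup_{x→+∞} x·U'(x)/U(x)`, taken in `EReal`
(the real ratio uses the convention that division by `0` gives `0`). -/
noncomputable def AEplus (U : ℝ → ℝ) : EReal :=
  Filter.limsup (fun x : ℝ => ((x * deriv U x / U x : ℝ) : EReal)) Filter.atTop

/-- Asymptotic elasticity at `-∞`: `liminf_{x→−∞} x·U'(x)/U(x)`, taken in `EReal`. -/
noncomputable def AEminus (U : ℝ → ℝ) : EReal :=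
  Filter.liminf (fun x : ℝ => ((x * deriv U x / U x : ℝ) : EReal)) Filter.atBot

open Topology Bornology

namespace EReal

variable {α : Type*} {l : Filter α} {u c : α → ℝ}

theorem limsup_coe_mul_le_of_tendsto_one (hc : Tendsto c l (𝓝 1)) :
    limsup (fun x => ((u x * c x : ℝ) : EReal)) l ≤ limsup (fun x => (u x : EReal)) l := by
  rw [limsup_le_iff]
  intro y hy
  obtain ⟨b, hub, hby⟩ := exists_between_coe_real hy
  have hbc : ∀ᶠ x in l, ((b * c x : ℝ) : EReal) < y := by
    have : Tendsto (fun x => ((b * c x : ℝ) : EReal)) l (𝓝 (b : EReal)) :=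
      (continuous_coe_real_ereal.tendsto b).comp (by simpa using hc.const_mul b)
    exact this.eventually (gt_mem_nhds hby)
  filter_upwards [eventually_lt_of_limsup_lt hub, hbc, hc.eventually (lt_mem_nhds one_pos)]
    with x hux hbcx hcx
  exact (EReal.coe_lt_coe (mul_lt_mul_of_pos_right (EReal.coe_lt_coe_iff.mp hux) hcx)).trans hbcx

theorem limsup_coe_mul_of_tendsto_one (hc : Tendsto c l (𝓝 1)) :
    limsup (fun x => ((u x * c x : ℝ) : EReal)) l = limsup (fun x => (u x : EReal)) l := by
  refine le_antisymm (limsup_coe_mul_le_of_tendsto_one hc) ?_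
  have hc_inv : Tendsto (fun x => (c x)⁻¹) l (𝓝 1) := by simpa using hc.inv₀ one_ne_zero
  calc limsup (fun x => (u x : EReal)) l
      = limsup (fun x => ((u x * c x * (c x)⁻¹ : ℝ) : EReal)) l := by
        refine limsup_congr ?_
        filter_upwards [hc.eventually_ne one_ne_zero] with x hx
        rw [mul_inv_cancel_right₀ hx]
    _ ≤ limsup (fun x => ((u x * c x : ℝ) : EReal)) l :=
        limsup_coe_mul_le_of_tendsto_one hc_inv

theorem liminf_coe_mul_of_tendsto_one (hc : Tendsto c l (𝓝 1)) :
    liminf (fun x => ((u x * c x : ℝ) : EReal)) l = liminf (fun x => (u x : EReal)) l := by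
  have h := limsup_coe_mul_of_tendsto_one (u := fun x => -u x) hc
  simp only [neg_mul, coe_neg] at h
  rw [← neg_inj, ← limsup_neg, ← limsup_neg]
  exact h

end EReal

section Translation

variable {α β : Type*} [AddCommGroup α] [LinearOrder α] [IsOrderedAddMonoid α]
  [CompleteLattice β]

theorem Filter.limsup_comp_sub_const_atTop (f : α → β) (z : α) :
    limsup (fun x => f (x - z)) atTop = limsup f atTop := by
  rw [← Function.comp_def, limsup_comp, map_sub_atTop_eq]

theorem Filter.liminf_comp_sub_const_atBot (f : α → β) (z : α) :
    liminf (fun x => f (x - z)) atBot = liminf f atBot := by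
  rw [← Function.comp_def, liminf_comp]
  congr 1
  exact map_sub_atTop_eq (α := αᵒᵈ) z

end Translation

theorem tendsto_div_sub_const_cobounded {𝕜 : Type*} [NormedField 𝕜] (z : 𝕜) :
    Tendsto (fun x => x / (x - z)) (cobounded 𝕜) (𝓝 1) := by
  have h : Tendsto (fun x => 1 + z * (x - z)⁻¹) (cobounded 𝕜) (𝓝 1) := by
    simpa using
      ((tendsto_inv₀_cobounded.comp (tendsto_sub_const_cobounded z)).const_mul z).const_add 1
  refine h.congr' ?_
  filter_upwards [(tendsto_sub_const_cobounded z).eventually_ne_cobounded 0] with x hx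
  field_simp
  ring

noncomputable def elasticity (U : ℝ → ℝ) (x : ℝ) : ℝ := x * deriv U x / U x

theorem elasticity_comp_sub_const (U : ℝ → ℝ) {z x : ℝ} (hx : x - z ≠ 0) :
    elasticity (fun y => U (y - z)) x = elasticity U (x - z) * (x / (x - z)) := by
  rw [elasticity, elasticity, deriv_comp_sub_const]
  field_simp

theorem AE_benchmark_shift_general (Utld : ℝ → ℝ) (z : ℝ) :
    AEminus (fun x => Utld (x - z)) = AEminus Utld ∧
    ((∃ x₀ : ℝ, 0 < Utld x₀) → AEplus (fun x => Utld (x - z)) = AEplus Utld) := by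
  have hshift : ∀ᶠ x in cobounded ℝ, (elasticity (fun y => Utld (y - z)) x : EReal) =
      ((elasticity Utld (x - z) * (x / (x - z)) : ℝ) : EReal) := by
    filter_upwards [(tendsto_sub_const_cobounded z).eventually_ne_cobounded 0] with x hx
    rw [elasticity_comp_sub_const Utld hx]
  have hratio := tendsto_div_sub_const_cobounded z
  refine ⟨?_, fun _ => ?_⟩
  · calc AEminus (fun x => Utld (x - z))
        = liminf (fun x => ((elasticity Utld (x - z) * (x / (x - z)) : ℝ) : EReal)) atBot :=
          liminf_congr (hshift.filter_mono IsOrderBornology.atBot_le_cobounded)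
      _ = liminf (fun x => (elasticity Utld (x - z) : EReal)) atBot :=
          EReal.liminf_coe_mul_of_tendsto_one
            (hratio.mono_left IsOrderBornology.atBot_le_cobounded)
      _ = AEminus Utld := liminf_comp_sub_const_atBot (fun x => (elasticity Utld x : EReal)) z
  · calc AEplus (fun x => Utld (x - z))
        = limsup (fun x => ((elasticity Utld (x - z) * (x / (x - z)) : ℝ) : EReal)) atTop :=
          limsup_congr (hshift.filter_mono IsOrderBornology.atTop_le_cobounded)
      _ = limsup (fun x => (elasticity Utld (x - z) : EReal)) atTop :=
          EReal.limsup_coe_mul_of_tendsto_one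
            (hratio.mono_left IsOrderBornology.atTop_le_cobounded)
      _ = AEplus Utld := limsup_comp_sub_const_atTop (fun x => (elasticity Utld x : EReal)) z

/-- Let `Ũ : ℝ → ℝ` be concave, nondecreasing, non-constant and continuously
differentiable, `z ∈ ℝ` and `U x := Ũ (x − z)`. Then `AE₋(U) = AE₋(Ũ)`; and if moreover
`Ũ x₀ > 0` for some `x₀`, then `AE₊(U) = AE₊(Ũ)`. -/
theorem AE_benchmark_shift (Utld : ℝ → ℝ) (hconc : ConcaveOn ℝ Set.univ Utld)
    (hmono : Monotone Utld) (hnonconst : ∃ a b : ℝ, Utld a ≠ Utld b)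
    (hC1 : ContDiff ℝ 1 Utld) (z : ℝ) :
    AEminus (fun x => Utld (x - z)) = AEminus Utld ∧
    ((∃ x₀ : ℝ, 0 < Utld x₀) → AEplus (fun x => Utld (x - z)) = AEplus Utld) :=
  AE_benchmark_shift_general Utld z
end

section
/- Let X and Y be Polish spaces equipped with their Borel σ-algebras, let q be a Markov kernel from X to Y, and let f : X × Y → EReal be lower semianalytic, meaning that {z ∈ X × Y : f(z) ≤ a} is an analytic set for every a ∈ ℝ. Define λ : X → EReal by λ(x) := I_{q(x)}(f(x, ·)). Then λ is lower semianalytic: {x ∈ X : λ(x) ≤ a} is an analytic subset of X for every a ∈ ℝ. -/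
open MeasureTheory ProbabilityTheory
open scoped ENNReal

/-- The `[0,∞]`-valued positive part `a⁺ = max(a,0)` of `a : EReal`. -/
noncomputable def ePos (a : EReal) : ℝ≥0∞ := (max a 0).abs

/-- The `[0,∞]`-valued negative part `a⁻ = max(−a,0)` of `a : EReal`. -/
noncomputable def eNeg (a : EReal) : ℝ≥0∞ := (max (-a) 0).abs

/-- The `(−∞)`-integral `I_p(f) := (∫⁻ f⁺ dp) − (∫⁻ f⁻ dp)` computed in `EReal`; note that
`EReal` subtraction satisfies `⊤ - ⊤ = ⊥`, which implements the stipulation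
`I_p(f) = −∞` when both integrals are infinite. -/
noncomputable def Iminus {Ω : Type*} [MeasurableSpace Ω] (p : Measure Ω)
    (f : Ω → EReal) : EReal :=
  ((∫⁻ ω, ePos (f ω) ∂p : ℝ≥0∞) : EReal) - ((∫⁻ ω, eNeg (f ω) ∂p : ℝ≥0∞) : EReal)

/-!
The heart of the matter is that `x ↦ κ x A` is upper semianalytic for an analytic set
`A = g '' (ℕ → ℕ)`. If `c < κ x A`, continuity from below produces a bound `ν : ℕ → ℕ` with
`c < κ x (g '' {σ | σ i ≤ ν i for i < k})` for every `k`; conversely, continuity from above on the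
closures of these images, together with compactness of `{σ | σ ≤ ν}`, gives
`c ≤ κ x (g '' {σ | σ ≤ ν}) ≤ κ x A`. So `{x | c < κ x A}` lies between the projection of a
Borel subset of `X × (ℕ → ℕ)` and `{x | c ≤ κ x A}`, and projections of Borel sets are analytic.
The same argument for a single measure shows that analytic sets are null measurable.

By Fatou's lemma, `∫⁻ h ∂μ` is the supremum over `n` of the staircase sums
`∑ k < (n + 1) ^ 2, μ {t_k < h} / (n + 1)` with `t_k = (k + 1) / (n + 1)`. For `h = f⁻` the sets
`{t < h}` are analytic, so the integral `N` of `f⁻` is upper semianalytic; for `h = f⁺` we have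
`μ {t < h} = 1 - μ {h ≤ t}`, so the integral `P` of `f⁺` is lower semianalytic. Sections are
avoided by integrating over `X × Y` against the kernel `Kernel.id ×ₖ q`. Finally `λ x ≤ a` iff
`P x + a⁻ ≤ N x + a⁺`, and `{h ≤ k} = ⋂ r ∈ D, {h ≤ r} ∪ {r ≤ k}` is analytic for `h` lower and
`k` upper semianalytic, `D` being countable and dense.
-/

open Set Filter Topology
open scoped NNReal

def prefixIic {k : ℕ} (s : Fin k → ℕ) : Set (ℕ → ℕ) := {σ | ∀ i : Fin k, σ i ≤ s i}

theorem prefixIic_zero (s : Fin 0 → ℕ) : prefixIic s = univ := by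
  ext σ
  simp [prefixIic]

theorem prefixIic_snoc {k : ℕ} (s : Fin k → ℕ) (n : ℕ) :
    prefixIic (Fin.snoc s n : Fin (k + 1) → ℕ) = prefixIic s ∩ {σ | σ k ≤ n} := by
  ext σ
  simp [prefixIic, Fin.forall_fin_succ']

theorem iUnion_prefixIic_snoc {k : ℕ} (s : Fin k → ℕ) :
    ⋃ n, prefixIic (Fin.snoc s n : Fin (k + 1) → ℕ) = prefixIic s := by
  simp_rw [prefixIic_snoc, ← inter_iUnion]
  exact inter_eq_left.2 fun σ _ => mem_iUnion.2 ⟨σ k, le_rfl (a := σ k)⟩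

theorem monotone_prefixIic_snoc {k : ℕ} (s : Fin k → ℕ) :
    Monotone fun n => prefixIic (Fin.snoc s n : Fin (k + 1) → ℕ) := fun _ _ hmn => by
  simp_rw [prefixIic_snoc]
  exact inter_subset_inter_right _ fun σ hσ => le_trans hσ hmn

theorem antitone_prefixIic (ν : ℕ → ℕ) : Antitone fun k => prefixIic fun i : Fin k => ν i :=
  fun _ _ hkl _ hσ i => hσ (Fin.castLE hkl i)

theorem isCompact_Iic_nat (ν : ℕ → ℕ) : IsCompact (Iic ν) :=
  pi_univ_Iic ν ▸ isCompact_univ_pi fun _ => (finite_Iic _).isCompact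

theorem exists_seq_forall_prefix (P : ∀ k, (Fin k → ℕ) → Prop) (h0 : ∀ s, P 0 s)
    (hstep : ∀ k s, P k s → ∃ n, P (k + 1) (Fin.snoc s n)) :
    ∃ ν : ℕ → ℕ, ∀ k, P k fun i => ν i := by
  classical
  choose! next hnext using hstep
  let pre : ∀ k, Fin k → ℕ := fun k =>
    Nat.rec (motive := fun k => Fin k → ℕ) Fin.elim0 (fun k s => Fin.snoc s (next k s)) k
  have hpre : ∀ k, (fun i : Fin k => pre (i + 1) (Fin.last i)) = pre k := by
    intro k
    induction k with
    | zero => exact funext fun i => i.elim0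
    | succ k ih =>
      funext i
      refine Fin.lastCases ?_ (fun j => ?_) i
      · rfl
      · change _ = Fin.snoc (α := fun _ => ℕ) (pre k) (next k (pre k)) j.castSucc
        rw [Fin.snoc_castSucc, ← ih]
        rfl
  have hP : ∀ k, P k (pre k) := fun k => by
    induction k with
    | zero => exact h0 _
    | succ k ih => exact hnext k _ ih
  exact ⟨fun i => pre (i + 1) (Fin.last i), fun k => hpre k ▸ hP k⟩

theorem exists_tendsto_subseq_of_mem_prefixIic {ν : ℕ → ℕ} {σ : ℕ → ℕ → ℕ}
    (hσ : ∀ k, σ k ∈ prefixIic fun i : Fin k => ν i) :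
    ∃ τ ∈ Iic ν, ∃ φ : ℕ → ℕ, StrictMono φ ∧ Tendsto (σ ∘ φ) atTop (𝓝 τ) := by
  obtain ⟨τ, hτ, φ, hφ, hlim⟩ :=
    (isCompact_Iic_nat ν).tendsto_subseq (x := fun k i => min (σ k i) (ν i))
      fun k i => min_le_right _ _
  refine ⟨τ, hτ, φ, hφ, tendsto_pi_nhds.2 fun i => (tendsto_pi_nhds.1 hlim i).congr' ?_⟩
  filter_upwards [eventually_gt_atTop i] with j hj
  exact min_eq_left (hσ (φ j) (⟨i, hj.trans_le hφ.le_apply⟩ : Fin (φ j)))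

theorem iInter_closure_image_prefixIic_subset {Z : Type*} [TopologicalSpace Z]
    [FirstCountableTopology Z] [T2Space Z] {g : (ℕ → ℕ) → Z} (hg : Continuous g) (ν : ℕ → ℕ) :
    ⋂ k, closure (g '' prefixIic fun i : Fin k => ν i) ⊆ g '' Iic ν := by
  intro z hz
  obtain ⟨U, hU⟩ := (𝓝 z).exists_antitone_basis
  have : ∀ k, ∃ σ ∈ prefixIic (fun i : Fin k => ν i), g σ ∈ U k := fun k => by
    obtain ⟨_, hzU, σ, hσ, rfl⟩ := mem_closure_iff_nhds.1 (mem_iInter.1 hz k) (U k) (hU.mem k)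
    exact ⟨σ, hσ, hzU⟩
  choose σ hσ hgσ using this
  obtain ⟨τ, hτ, φ, hφ, hlim⟩ := exists_tendsto_subseq_of_mem_prefixIic hσ
  exact ⟨τ, hτ, tendsto_nhds_unique ((hg.tendsto τ).comp hlim)
    ((hU.tendsto hgσ).comp hφ.tendsto_atTop)⟩

theorem exists_forall_lt_measure_image_prefixIic {Z : Type*} [MeasurableSpace Z] (μ : Measure Z)
    (g : (ℕ → ℕ) → Z) {c : ℝ≥0∞} (hc : c < μ (range g)) :
    ∃ ν : ℕ → ℕ, ∀ k, c < μ (g '' prefixIic fun i : Fin k => ν i) := by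
  refine exists_seq_forall_prefix (fun k s => c < μ (g '' prefixIic s))
    (fun s => by rwa [prefixIic_zero, image_univ]) fun k s hs => ?_
  have hmono : Monotone fun n => g '' prefixIic (Fin.snoc s n : Fin (k + 1) → ℕ) :=
    fun _ _ hmn => image_mono (monotone_prefixIic_snoc s hmn)
  rw [← iUnion_prefixIic_snoc s, image_iUnion, hmono.measure_iUnion] at hs
  exact lt_iSup_iff.1 hs

theorem le_measure_image_Iic_of_forall_le {Z : Type*} [TopologicalSpace Z]
    [FirstCountableTopology Z] [T2Space Z] [MeasurableSpace Z] [OpensMeasurableSpace Z]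
    (μ : Measure Z) [IsFiniteMeasure μ] {g : (ℕ → ℕ) → Z} (hg : Continuous g) {ν : ℕ → ℕ}
    {c : ℝ≥0∞} (h : ∀ k, c ≤ μ (closure (g '' prefixIic fun i : Fin k => ν i))) :
    c ≤ μ (g '' Iic ν) := by
  have hanti : Antitone fun k => closure (g '' prefixIic fun i : Fin k => ν i) :=
    fun _ _ hkl => closure_mono (image_mono (antitone_prefixIic ν hkl))
  calc c ≤ ⨅ k, μ (closure (g '' prefixIic fun i : Fin k => ν i)) := le_iInf h
    _ = μ (⋂ k, closure (g '' prefixIic fun i : Fin k => ν i)) :=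
      (hanti.measure_iInter (fun _ => isClosed_closure.nullMeasurableSet)
        ⟨0, measure_ne_top _ _⟩).symm
    _ ≤ μ (g '' Iic ν) := measure_mono (iInter_closure_image_prefixIic_subset hg ν)

theorem nullMeasurableSet_of_forall_lt_exists_subset {Ω : Type*} [MeasurableSpace Ω]
    {μ : Measure Ω} {s : Set Ω} (hs : μ s ≠ ∞)
    (h : ∀ c < μ s, ∃ t ⊆ s, MeasurableSet t ∧ c ≤ μ t) : NullMeasurableSet s μ := by
  rcases eq_zero_or_pos (μ s) with h0 | hpos
  · exact NullMeasurableSet.of_null h0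
  obtain ⟨u, -, hu, hlim⟩ := exists_seq_strictMono_tendsto' hpos
  choose t hts htm hμt using fun n => h (u n) (hu n).2
  have hU : MeasurableSet (⋃ n, t n) := .iUnion htm
  have hle : μ s ≤ μ (⋃ n, t n) :=
    le_of_tendsto' hlim fun n => (hμt n).trans (measure_mono (subset_iUnion t n))
  exact hU.nullMeasurableSet.congr
    (ae_eq_of_subset_of_measure_ge (iUnion_subset hts) hle hU.nullMeasurableSet hs)

theorem MeasureTheory.AnalyticSet.nullMeasurableSet {Z : Type*} [TopologicalSpace Z]
    [FirstCountableTopology Z] [T2Space Z] [MeasurableSpace Z] [OpensMeasurableSpace Z]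
    {A : Set Z} (hA : AnalyticSet A) (μ : Measure Z) [IsFiniteMeasure μ] :
    NullMeasurableSet A μ := by
  rw [AnalyticSet] at hA
  rcases hA with rfl | ⟨g, hg, rfl⟩
  · exact nullMeasurableSet_empty
  refine nullMeasurableSet_of_forall_lt_exists_subset (measure_ne_top _ _) fun c hc => ?_
  obtain ⟨ν, hν⟩ := exists_forall_lt_measure_image_prefixIic μ g hc
  exact ⟨g '' Iic ν, image_subset_range _ _,
    ((isCompact_Iic_nat ν).image hg).isClosed.measurableSet,
    le_measure_image_Iic_of_forall_le μ hg fun k => (hν k).le.trans (measure_mono subset_closure)⟩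

theorem MeasureTheory.AnalyticSet.union {X : Type*} [TopologicalSpace X] {s t : Set X}
    (hs : AnalyticSet s) (ht : AnalyticSet t) : AnalyticSet (s ∪ t) := by
  rw [union_eq_iUnion]
  exact .iUnion (Bool.forall_bool.2 ⟨ht, hs⟩)

theorem MeasureTheory.AnalyticSet.inter {X : Type*} [TopologicalSpace X] [T2Space X]
    {s t : Set X} (hs : AnalyticSet s) (ht : AnalyticSet t) : AnalyticSet (s ∩ t) := by
  rw [inter_eq_iInter]
  exact .iInter (Bool.forall_bool.2 ⟨ht, hs⟩)

theorem analyticSet_setOf_const {X : Type*} [TopologicalSpace X] [PolishSpace X] (p : Prop) :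
    AnalyticSet {_x : X | p} := by
  by_cases hp : p
  · simpa [hp] using isClosed_univ.analyticSet
  · simpa [hp] using analyticSet_empty

section Semianalytic

variable {X α : Type*} [TopologicalSpace X]

def UpperSemianalytic [LE α] (h : X → α) : Prop := ∀ c, AnalyticSet {x | c ≤ h x}

def LowerSemianalytic [LE α] (h : X → α) : Prop := ∀ c, AnalyticSet {x | h x ≤ c}

theorem upperSemianalytic_const [PolishSpace X] [LE α] (a : α) :
    UpperSemianalytic fun _ : X => a :=
  fun _ => analyticSet_setOf_const _

theorem UpperSemianalytic.of_forall_exists_between [PolishSpace X] [LinearOrder α] [OrderBot α]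
    [TopologicalSpace α] [OrderTopology α] [DenselyOrdered α] [FirstCountableTopology α]
    {h : X → α} (H : ∀ c, ∃ S, AnalyticSet S ∧ {x | c < h x} ⊆ S ∧ S ⊆ {x | c ≤ h x}) :
    UpperSemianalytic h := by
  intro d
  rcases eq_bot_or_bot_lt d with rfl | hd
  · simpa using analyticSet_setOf_const True
  obtain ⟨u, -, hu, hlim⟩ := exists_seq_strictMono_tendsto' hd
  choose S hS hlt hle using fun n => H (u n)
  convert AnalyticSet.iInter hS using 1
  ext x
  simp only [mem_ofPred_eq, mem_iInter]
  exact ⟨fun hx n => hlt n ((hu n).2.trans_le hx),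
    fun hx => le_of_tendsto' hlim fun n => hle n (hx n)⟩

theorem UpperSemianalytic.iSup [PolishSpace X] [CompleteLinearOrder α] [TopologicalSpace α]
    [OrderTopology α] [DenselyOrdered α] [FirstCountableTopology α] {f : ℕ → X → α}
    (hf : ∀ n, UpperSemianalytic (f n)) : UpperSemianalytic fun x => ⨆ n, f n x :=
  of_forall_exists_between fun c => ⟨⋃ n, {x | c ≤ f n x}, .iUnion fun n => hf n c,
    fun _ hx => mem_iUnion.2 ((lt_iSup_iff.1 hx).imp fun _ => le_of_lt),
    fun _ hx => (mem_iUnion.1 hx).elim fun n hn => le_iSup_of_le n hn⟩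

theorem UpperSemianalytic.add [PolishSpace X] {f g : X → ℝ≥0∞} (hf : UpperSemianalytic f)
    (hg : UpperSemianalytic g) : UpperSemianalytic fun x => f x + g x := by
  obtain ⟨D, hDc, hD⟩ := TopologicalSpace.exists_countable_dense ℝ≥0∞
  have : Countable (insert 0 D : Set ℝ≥0∞) := (hDc.insert 0).to_subtype
  refine of_forall_exists_between fun c =>
    ⟨⋃ r : (insert 0 D : Set ℝ≥0∞), {x | (r : ℝ≥0∞) ≤ f x} ∩ {x | c - r ≤ g x},
      .iUnion fun r => (hf r).inter (hg _), fun x hx => ?_, fun x hx => ?_⟩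
  · rw [mem_iUnion]
    by_cases hcg : c - g x < f x
    · obtain ⟨r, hrD, hr⟩ := hD.exists_between hcg
      exact ⟨⟨r, mem_insert_of_mem _ hrD⟩, hr.2.le, tsub_le_iff_tsub_le.1 hr.1.le⟩
    · have hc : c ≤ g x := by
        by_contra! hgc
        have : f x + g x ≤ c := by
          simpa [tsub_add_cancel_of_le hgc.le] using add_le_add_left (not_lt.1 hcg) (g x)
        exact hx.not_ge this
      exact ⟨⟨0, mem_insert _ _⟩, zero_le (a := f x), by simpa using hc⟩
  · obtain ⟨r, hrf, hrg⟩ := mem_iUnion.1 hx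
    calc c ≤ r + g x := tsub_le_iff_left.1 hrg
      _ ≤ f x + g x := by gcongr; exact hrf

theorem UpperSemianalytic.const_mul {h : X → ℝ≥0∞} (hh : UpperSemianalytic h) {a : ℝ≥0∞}
    (ha₀ : a ≠ 0) (ha : a ≠ ∞) : UpperSemianalytic fun x => a * h x := by
  intro d
  simpa only [ENNReal.div_le_iff_le_mul (Or.inl ha₀) (Or.inl ha), mul_comm] using hh (d / a)

theorem UpperSemianalytic.finsetSum [PolishSpace X] {ι : Type*} {f : ι → X → ℝ≥0∞}
    (s : Finset ι) (hf : ∀ i ∈ s, UpperSemianalytic (f i)) :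
    UpperSemianalytic fun x => ∑ i ∈ s, f i x := by
  classical
  induction s using Finset.induction_on with
  | empty => simpa using upperSemianalytic_const (0 : ℝ≥0∞)
  | insert i s hi ih =>
    simp_rw [Finset.sum_insert hi]
    exact (hf i (Finset.mem_insert_self i s)).add
      (ih fun j hj => hf j (Finset.mem_insert_of_mem hj))

theorem LowerSemianalytic.iSup [T2Space X] [CompleteLattice α] {f : ℕ → X → α}
    (hf : ∀ n, LowerSemianalytic (f n)) : LowerSemianalytic fun x => ⨆ n, f n x := fun c => by
  simpa only [iSup_le_iff, ofPred_forall] using AnalyticSet.iInter fun n => hf n c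

theorem UpperSemianalytic.const_tsub [Preorder α] [AddCommSemigroup α] [Sub α] [OrderedSub α]
    {h : X → α} (hh : UpperSemianalytic h) (a : α) : LowerSemianalytic fun x => a - h x :=
  fun c => by simpa only [tsub_le_iff_tsub_le] using hh (a - c)

theorem LowerSemianalytic.add_const [PolishSpace X] {h : X → ℝ≥0∞} (hh : LowerSemianalytic h)
    {a : ℝ≥0∞} (ha : a ≠ ∞) : LowerSemianalytic fun x => h x + a := by
  intro c
  have : {x | h x + a ≤ c} = {x | h x ≤ c - a} ∩ {_x | a ≤ c} := by
    ext x
    simp only [mem_inter_iff, mem_ofPred_eq]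
    exact ⟨fun hx => ⟨ENNReal.le_sub_of_add_le_right ha hx, le_of_add_le_right hx⟩,
      fun hx => (add_le_add_left hx.1 a).trans (tsub_add_cancel_of_le hx.2).le⟩
  rw [this]
  exact (hh _).inter (analyticSet_setOf_const _)

theorem analyticSet_le_of_lowerSemianalytic_of_upperSemianalytic [T2Space X] [LinearOrder α]
    [TopologicalSpace α] [OrderTopology α] [DenselyOrdered α] [TopologicalSpace.SeparableSpace α]
    {h k : X → α} (hh : LowerSemianalytic h) (hk : UpperSemianalytic k) :
    AnalyticSet {x | h x ≤ k x} := by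
  rcases isEmpty_or_nonempty X with hX | ⟨⟨x₀⟩⟩
  · simpa [eq_empty_of_isEmpty] using analyticSet_empty
  have : Nonempty α := ⟨h x₀⟩
  obtain ⟨D, hDc, hD⟩ := TopologicalSpace.exists_countable_dense α
  have : Countable D := hDc.to_subtype
  have : Nonempty D := hD.nonempty.to_subtype
  have : {x | h x ≤ k x} = ⋂ a : D, {x | h x ≤ a} ∪ {x | (a : α) ≤ k x} := by
    ext x
    simp only [mem_ofPred_eq, mem_iInter, mem_union]
    refine ⟨fun hx a => (le_or_gt (h x) a).imp_right fun ha => ha.le.trans hx, fun hx => ?_⟩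
    by_contra! hkh
    obtain ⟨a, haD, ha⟩ := hD.exists_between hkh
    exact (hx ⟨a, haD⟩).elim (fun h' => ha.2.not_ge h') fun h' => ha.1.not_ge h'
  rw [this]
  exact .iInter fun a => (hh a).union (hk a)

end Semianalytic

section Kernel

variable {X Z : Type*} [MeasurableSpace X] [MeasurableSpace Z]

theorem measurable_kernel_apply_prefix (κ : Kernel X Z) {k : ℕ} {C : (Fin k → ℕ) → Set Z}
    (hC : ∀ s, MeasurableSet (C s)) :
    Measurable fun p : X × (ℕ → ℕ) => κ p.1 (C fun i => p.2 i) := by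
  have : Measurable fun q : X × (Fin k → ℕ) => κ q.1 (C q.2) :=
    measurable_from_prod_countable_left fun s => κ.measurable_coe (hC s)
  exact this.comp (measurable_fst.prodMk (measurable_pi_lambda _ fun i =>
    (measurable_pi_apply _).comp measurable_snd))

variable [TopologicalSpace X] [PolishSpace X] [BorelSpace X] [TopologicalSpace Z]
  [FirstCountableTopology Z] [T2Space Z] [OpensMeasurableSpace Z]

theorem upperSemianalytic_kernel_apply (κ : Kernel X Z) [IsFiniteKernel κ] {A : Set Z}
    (hA : AnalyticSet A) : UpperSemianalytic fun x => κ x A := by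
  refine UpperSemianalytic.of_forall_exists_between fun c => ?_
  rw [AnalyticSet] at hA
  rcases hA with rfl | ⟨g, hg, rfl⟩
  · exact ⟨∅, analyticSet_empty, fun x hx => by simp at hx, empty_subset _⟩
  let E : Set (X × (ℕ → ℕ)) :=
    {p | ∀ k, c < κ p.1 (closure (g '' prefixIic fun i : Fin k => p.2 i))}
  have hE : MeasurableSet E := by
    simp only [E, ofPred_forall]
    exact .iInter fun k => measurableSet_lt measurable_const
      (measurable_kernel_apply_prefix κ (C := fun s => closure (g '' prefixIic s))
        fun _ => isClosed_closure.measurableSet)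
  refine ⟨Prod.fst '' E, hE.analyticSet_image measurable_fst, fun x hx => ?_, ?_⟩
  · obtain ⟨ν, hν⟩ := exists_forall_lt_measure_image_prefixIic (κ x) g hx
    exact ⟨(x, ν), fun k => (hν k).trans_le (measure_mono subset_closure), rfl⟩
  · rintro _ ⟨⟨x, ν⟩, hxν, rfl⟩
    exact (le_measure_image_Iic_of_forall_le (κ x) hg fun k => (hxν k).le).trans
      (measure_mono (image_subset_range _ _))

end Kernel

noncomputable def staircase (δ : ℝ≥0∞) (N : ℕ) (t : ℝ≥0∞) : ℝ≥0∞ :=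
  ∑ k ∈ Finset.range N, if (k + 1) * δ < t then δ else 0

theorem monotone_staircase (δ : ℝ≥0∞) (N : ℕ) : Monotone (staircase δ N) := fun _ _ hst =>
  Finset.sum_le_sum fun _ _ => by
    split_ifs with h₁ h₂
    · exact le_rfl
    · exact absurd (h₁.trans_le hst) h₂
    all_goals exact zero_le

theorem staircase_le_mul (δ : ℝ≥0∞) (N : ℕ) (t : ℝ≥0∞) : staircase δ N t ≤ N * δ :=
  (Finset.sum_le_card_nsmul _ _ δ fun _ _ => by split_ifs <;> simp).trans_eq (by simp)

theorem staircase_le (δ : ℝ≥0∞) (N : ℕ) (t : ℝ≥0∞) : staircase δ N t ≤ t := by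
  induction N with
  | zero => simp [staircase]
  | succ N ih =>
    rw [staircase, Finset.sum_range_succ, ← staircase]
    split_ifs with h
    · calc staircase δ N t + δ ≤ N * δ + δ := by gcongr; exact staircase_le_mul δ N t
        _ = (N + 1) * δ := by ring
        _ ≤ t := h.le
    · simpa using ih

theorem le_staircase_add {δ s t : ℝ≥0∞} {N : ℕ} (hst : s ≤ t) (hs : s ≤ N * δ) :
    s ≤ staircase δ N t + δ := by
  induction N with
  | zero => simp_all
  | succ N ih =>
    push_cast at hs
    have hmono : staircase δ N t ≤ staircase δ (N + 1) t := by
      simp only [staircase, Finset.sum_range_succ]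
      exact le_self_add
    by_cases hN : s ≤ N * δ
    · exact (ih hN).trans (by gcongr)
    · have hfull : staircase δ N t = N * δ := by
        rw [staircase, Finset.sum_congr rfl fun k hk => if_pos ?_]
        · simp
        · refine lt_of_le_of_lt ?_ ((not_le.1 hN).trans_le hst)
          gcongr
          exact_mod_cast Finset.mem_range.1 hk
      calc s ≤ (N + 1) * δ := hs
        _ = staircase δ N t + δ := by rw [hfull]; ring
        _ ≤ staircase δ (N + 1) t + δ := by gcongr

theorem tendsto_staircase (t : ℝ≥0∞) :
    Tendsto (fun n : ℕ => staircase ((n : ℝ≥0∞) + 1)⁻¹ ((n + 1) ^ 2) t) atTop (𝓝 t) := by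
  have hN : ∀ n : ℕ, (((n + 1) ^ 2 : ℕ) : ℝ≥0∞) * ((n : ℝ≥0∞) + 1)⁻¹ = n + 1 := fun n => by
    rw [Nat.cast_pow, Nat.cast_succ, pow_two, mul_assoc,
      ENNReal.mul_inv_cancel (by positivity) (by simp), mul_one]
  have hlarge : Tendsto (fun n : ℕ => (n : ℝ≥0∞) + 1) atTop (𝓝 ∞) := by
    simpa [Function.comp_def] using ENNReal.tendsto_nat_nhds_top.comp (tendsto_add_atTop_nat 1)
  have hsmall : Tendsto (fun n : ℕ => ((n : ℝ≥0∞) + 1)⁻¹) atTop (𝓝 0) := by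
    simpa using tendsto_inv_iff.2 hlarge
  have hlow : Tendsto (fun n : ℕ => min t ((n : ℝ≥0∞) + 1) - ((n : ℝ≥0∞) + 1)⁻¹) atTop (𝓝 t) := by
    simpa using ENNReal.Tendsto.sub (tendsto_const_nhds.min hlarge) hsmall (Or.inr (by simp))
  refine tendsto_of_tendsto_of_tendsto_of_le_of_le hlow tendsto_const_nhds (fun n => ?_)
    fun n => staircase_le _ _ t
  exact tsub_le_iff_right.2
    (le_staircase_add (min_le_left _ _) ((min_le_right _ _).trans (hN n).ge))

theorem lintegral_eq_iSup_of_tendsto {Ω : Type*} [MeasurableSpace Ω] {μ : Measure Ω}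
    {F : ℕ → Ω → ℝ≥0∞} {g : Ω → ℝ≥0∞} (hF : ∀ n, AEMeasurable (F n) μ)
    (hFg : ∀ n ω, F n ω ≤ g ω) (hlim : ∀ ω, Tendsto (fun n => F n ω) atTop (𝓝 (g ω))) :
    ∫⁻ ω, g ω ∂μ = ⨆ n, ∫⁻ ω, F n ω ∂μ := by
  refine le_antisymm ?_ (iSup_le fun n => lintegral_mono (hFg n))
  calc ∫⁻ ω, g ω ∂μ = ∫⁻ ω, liminf (fun n => F n ω) atTop ∂μ := by
        simp_rw [(hlim _).liminf_eq]
    _ ≤ liminf (fun n => ∫⁻ ω, F n ω ∂μ) atTop := lintegral_liminf_le' hF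
    _ ≤ ⨆ n, ∫⁻ ω, F n ω ∂μ := liminf_le_of_frequently_le' (.of_forall (le_iSup _))

theorem lintegral_eq_iSup_sum_measure_lt {Ω : Type*} [MeasurableSpace Ω] {μ : Measure Ω}
    {g : Ω → ℝ≥0∞} (hg : AEMeasurable g μ) :
    ∫⁻ ω, g ω ∂μ = ⨆ n : ℕ, ∑ k ∈ Finset.range ((n + 1) ^ 2),
      ((n : ℝ≥0∞) + 1)⁻¹ * μ {ω | (k + 1) * ((n : ℝ≥0∞) + 1)⁻¹ < g ω} := by
  rw [lintegral_eq_iSup_of_tendsto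
    (fun n => (monotone_staircase _ _).measurable.comp_aemeasurable hg)
    (fun n ω => staircase_le _ _ (g ω)) fun ω => tendsto_staircase (g ω)]
  congr 1
  ext n
  have hnull : ∀ c : ℝ≥0∞, NullMeasurableSet {ω | c < g ω} μ :=
    fun c => nullMeasurableSet_lt aemeasurable_const hg
  simp only [Function.comp_apply, staircase]
  have hite : ∀ (c δ : ℝ≥0∞) ω,
      (if c < g ω then δ else 0) = {ω | c < g ω}.indicator (fun _ => δ) ω :=
    fun c δ ω => by simp [indicator_apply]
  simp_rw [hite]
  rw [lintegral_finsetSum' _ fun k _ => aemeasurable_const.indicator₀ (hnull _)]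
  exact Finset.sum_congr rfl fun k _ => lintegral_indicator_const₀ (hnull _) _

section KernelIntegral

variable {X Z : Type*} [MeasurableSpace X] [TopologicalSpace X] [PolishSpace X] [BorelSpace X]
  [MeasurableSpace Z] [TopologicalSpace Z] [FirstCountableTopology Z] [T2Space Z]
  [OpensMeasurableSpace Z]

theorem upperSemianalytic_lintegral_kernel (κ : Kernel X Z) [IsFiniteKernel κ] {h : Z → ℝ≥0∞}
    (hh : ∀ t, AnalyticSet {z | t < h z}) : UpperSemianalytic fun x => ∫⁻ z, h z ∂κ x := by
  have hmeas (x : X) : AEMeasurable h (κ x) :=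
    NullMeasurable.aemeasurable (measurable_of_Ioi fun t => (hh t).nullMeasurableSet (κ x))
  simp_rw [lintegral_eq_iSup_sum_measure_lt (hmeas _)]
  exact .iSup fun n => .finsetSum _ fun k _ =>
    (upperSemianalytic_kernel_apply κ (hh _)).const_mul (by simp) (by simp)

theorem lowerSemianalytic_lintegral_kernel (κ : Kernel X Z) [IsMarkovKernel κ] {h : Z → ℝ≥0∞}
    (hh : LowerSemianalytic h) : LowerSemianalytic fun x => ∫⁻ z, h z ∂κ x := by
  have hnull (x : X) (t : ℝ≥0∞) : NullMeasurableSet {z | h z ≤ t} (κ x) :=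
    (hh t).nullMeasurableSet (κ x)
  have hmeas (x : X) : AEMeasurable h (κ x) :=
    NullMeasurable.aemeasurable (measurable_of_Iic (hnull x))
  have hsum (x : X) (n : ℕ) (t : ℕ → ℝ≥0∞) :
      ∑ k ∈ Finset.range ((n + 1) ^ 2), ((n : ℝ≥0∞) + 1)⁻¹ * κ x {z | t k < h z} =
        ∑ k ∈ Finset.range ((n + 1) ^ 2), ((n : ℝ≥0∞) + 1)⁻¹ -
          ∑ k ∈ Finset.range ((n + 1) ^ 2), ((n : ℝ≥0∞) + 1)⁻¹ * κ x {z | h z ≤ t k} := by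
    refine ENNReal.eq_sub_of_add_eq (ENNReal.sum_ne_top.2 fun k _ => by
      exact ENNReal.mul_ne_top (by simp) (measure_ne_top _ _)) ?_
    rw [← Finset.sum_add_distrib]
    refine Finset.sum_congr rfl fun k _ => ?_
    have hcompl : {z | t k < h z} = {z | h z ≤ t k}ᶜ := by ext; simp
    rw [hcompl, prob_compl_eq_one_sub₀ (hnull x _), ← mul_add, tsub_add_cancel_of_le prob_le_one,
      mul_one]
  simp_rw [lintegral_eq_iSup_sum_measure_lt (hmeas _), hsum]
  exact .iSup fun n => UpperSemianalytic.const_tsub (.finsetSum _ fun k _ =>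
    (upperSemianalytic_kernel_apply κ (hh _)).const_mul (by simp) (by simp)) _

end KernelIntegral

theorem ePos_eq_toENNReal (a : EReal) : ePos a = a.toENNReal := by
  induction a using EReal.rec with
  | bot => simp [ePos]
  | top => simp [ePos]
  | coe r =>
    rw [ePos, ← EReal.coe_zero, ← EReal.coe_strictMono.monotone.map_max, EReal.abs_def,
      abs_of_nonneg (le_max_right _ _), EReal.real_coe_toENNReal, ENNReal.ofReal_max,
      ENNReal.ofReal_zero, max_eq_left zero_le]

theorem eNeg_eq_toENNReal_neg (a : EReal) : eNeg a = (-a).toENNReal :=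
  ePos_eq_toENNReal (-a)

theorem EReal.toENNReal_le_iff_le_coe {a : EReal} {t : ℝ≥0∞} : a.toENNReal ≤ t ↔ a ≤ t := by
  refine ⟨fun h => ?_, fun h => toENNReal_coe (x := t) ▸ toENNReal_le_toENNReal h⟩
  calc a ≤ max 0 a := le_max_right _ _
    _ = a.toENNReal := coe_toENNReal_eq_max.symm
    _ ≤ t := coe_ennreal_le_coe_ennreal_iff.2 h

theorem EReal.lt_toENNReal_iff_coe_lt {a : EReal} {t : ℝ≥0∞} : t < a.toENNReal ↔ t < a := by
  rw [← not_le, toENNReal_le_iff_le_coe, not_le]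

theorem EReal.coe_ennreal_sub_coe_ennreal_le_coe_iff (p n : ℝ≥0∞) (a : ℝ) :
    (p : EReal) - n ≤ a ↔ p + ENNReal.ofReal (-a) ≤ n + ENNReal.ofReal a := by
  rcases eq_or_ne n ∞ with rfl | hn
  · simp
  rcases eq_or_ne p ∞ with rfl | hp
  · simp [hn]
  lift p to ℝ≥0 using hp
  lift n to ℝ≥0 using hn
  rw [← ENNReal.toReal_le_toReal (by simp) (by simp), ENNReal.toReal_add (by simp) (by simp),
    ENNReal.toReal_add (by simp) (by simp), coe_nnreal_eq_coe_real, coe_nnreal_eq_coe_real,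
    ← coe_sub, EReal.coe_le_coe_iff]
  simp only [ENNReal.coe_toReal, ENNReal.toReal_ofReal']
  have := max_zero_sub_max_neg_zero_eq_self a
  constructor <;> intro <;> linarith

section LevelSets

variable {Z : Type*} [TopologicalSpace Z] {f : Z → EReal}

theorem analyticSet_lt_of_forall_analyticSet_le (hf : ∀ a : ℝ, AnalyticSet {z | f z ≤ a})
    (t : EReal) : AnalyticSet {z | f z < t} := by
  have : {z | f z < t} = ⋃ q : {q : ℚ // ((q : ℝ) : EReal) < t}, {z | f z ≤ (q : ℝ)} := by
    ext z
    simp only [mem_ofPred_eq, mem_iUnion, Subtype.exists, exists_prop]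
    refine ⟨fun h => ?_, fun ⟨q, hq, hz⟩ => hz.trans_lt hq⟩
    obtain ⟨q, h₁, h₂⟩ := EReal.exists_rat_btwn_of_lt h
    exact ⟨q, h₂, h₁.le⟩
  rw [this]
  exact .iUnion fun q => hf q

theorem lowerSemianalytic_toENNReal [PolishSpace Z] (hf : ∀ a : ℝ, AnalyticSet {z | f z ≤ a}) :
    LowerSemianalytic fun z => (f z).toENNReal := by
  intro t
  simp_rw [EReal.toENNReal_le_iff_le_coe]
  rcases eq_or_ne t ∞ with rfl | ht
  · simpa using analyticSet_setOf_const True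
  · simpa [EReal.coe_ennreal_toReal ht] using hf t.toReal

theorem analyticSet_lt_toENNReal_neg (hf : ∀ a : ℝ, AnalyticSet {z | f z ≤ a}) (t : ℝ≥0∞) :
    AnalyticSet {z | t < (-f z).toENNReal} := by
  simp_rw [EReal.lt_toENNReal_iff_coe_lt]
  convert analyticSet_lt_of_forall_analyticSet_le hf (-t) using 3
  exact EReal.lt_neg_comm

end LevelSets

theorem ProbabilityTheory.Kernel.id_prod_apply_eq_map {X Y : Type*} [MeasurableSpace X]
    [MeasurableSpace Y] (q : Kernel X Y) [IsSFiniteKernel q] (x : X) :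
    (Kernel.id ×ₖ q) x = (q x).map (Prod.mk x) := by
  rw [Kernel.prod_apply, Kernel.id_apply, Measure.dirac_prod]

/-- Let `X`, `Y` be Polish spaces with their Borel σ-algebras, `q` a Markov
kernel from `X` to `Y` and `f : X × Y → EReal` lower semianalytic. Then
`λ x := I_{q x}(f(x, ·))` is lower semianalytic. -/
theorem lowerSemianalytic_Iminus_kernel
    {X Y : Type} [TopologicalSpace X] [PolishSpace X] [MeasurableSpace X] [BorelSpace X]
    [TopologicalSpace Y] [PolishSpace Y] [MeasurableSpace Y] [BorelSpace Y]
    (q : Kernel X Y) [IsMarkovKernel q]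
    (f : X × Y → EReal)
    (hf : ∀ a : ℝ, MeasureTheory.AnalyticSet {z : X × Y | f z ≤ (a : EReal)}) :
    ∀ a : ℝ, MeasureTheory.AnalyticSet
      {x : X | Iminus (q x) (fun y => f (x, y)) ≤ (a : EReal)} := by
  intro a
  have hκ (x : X) (h : X × Y → ℝ≥0∞) : ∫⁻ z, h z ∂(Kernel.id ×ₖ q) x = ∫⁻ y, h (x, y) ∂q x := by
    rw [Kernel.id_prod_apply_eq_map, (measurableEmbedding_prodMk_left x).lintegral_map]
  have hP : LowerSemianalytic fun x => ∫⁻ y, ePos (f (x, y)) ∂q x := by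
    simpa only [hκ, ePos_eq_toENNReal] using
      lowerSemianalytic_lintegral_kernel (Kernel.id ×ₖ q) (lowerSemianalytic_toENNReal hf)
  have hN : UpperSemianalytic fun x => ∫⁻ y, eNeg (f (x, y)) ∂q x := by
    simpa only [hκ, eNeg_eq_toENNReal_neg] using
      upperSemianalytic_lintegral_kernel (Kernel.id ×ₖ q) (analyticSet_lt_toENNReal_neg hf)
  simp only [Iminus, EReal.coe_ennreal_sub_coe_ennreal_le_coe_iff]
  exact analyticSet_le_of_lowerSemianalytic_of_upperSemianalytic
    (hP.add_const ENNReal.ofReal_ne_top) (hN.add (upperSemianalytic_const _))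
end
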